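/- arXiv:2601.08562 — 2 statements merged into one kernel-verified Lean document; each statement's English description precedes it below -/
import Mathlib

section
/- Let G be a finite simple graph, v a vertex of G with neighbors v_1, ..., v_d, and let G' be obtained from G by deleting v and adding d new vertices u_1, ..., u_d where u_i is adjacent only to v_i. Then for every set X of vertices of G with v ∉ X, the set X ∪ {v} is a dominating set of G if and only if X ∪ {u_1, ..., u_d} is a dominating set of G'. -/
/-!
A vertex `w ≠ v` of `G` is dominated by `X ∪ {v}` iff `w ∈ X`, `w` has a neighbor in `X`, or
`w` is a neighbor of `v`. In the split graph the copy of `w` is dominated by `X` together with all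
pendant vertices under exactly the same condition, the third case being witnessed by the pendant
vertex attached to `w`. The vertex `v` itself is always dominated on the left, and the pendant
vertices always on the right.
-/

/-- The graph obtained from `G` by deleting `v` and attaching, for each neighbor `w`
of `v`, a new pendant vertex adjacent only to `w`. -/
def splitVertex {V : Type*} (G : SimpleGraph V) (v : V) :
    SimpleGraph ({u : V // u ≠ v} ⊕ {u : V // G.Adj v u}) where
  Adj x y :=
    match x, y with
    | .inl a, .inl b => G.Adj a.1 b.1
    | .inl a, .inr w => a.1 = w.1
    | .inr w, .inl a => a.1 = w.1
    | .inr _, .inr _ => False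
  symm := by
    constructor
    rintro (a | w) (b | u) h
    · exact G.adj_symm h
    · exact h
    · exact h
    · exact h
  loopless := by
    constructor
    rintro (a | w) h
    · exact G.irrefl h
    · exact h

namespace SimpleGraph

variable {V : Type*} (G : SimpleGraph V)

theorem mem_or_exists_adj_union_singleton_iff (S : Set V) (v w : V) :
    (w ∈ S ∪ {v} ∨ ∃ u ∈ S ∪ {v}, G.Adj u w) ↔
      w = v ∨ w ∈ S ∨ G.Adj v w ∨ ∃ u ∈ S, G.Adj u w := by
  simp only [Set.union_singleton, Set.mem_insert_iff, exists_eq_or_imp]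
  tauto

/-- The set `X ∪ {u₁, …, u_d}` of the split graph, for `X` a set of vertices of `G`. -/
abbrev splitVertexSet (v : V) (X : Set V) :
    Set ({u : V // u ≠ v} ⊕ {u : V // G.Adj v u}) :=
  Sum.inl '' {a | (a : V) ∈ X} ∪ Set.range Sum.inr

section splitVertex

variable {G} {v : V}

@[simp]
theorem splitVertex_adj_inr_inl {w : {u : V // G.Adj v u}} {a : {u : V // u ≠ v}} :
    (splitVertex G v).Adj (.inr w) (.inl a) ↔ (a : V) = w :=
  Iff.rfl

theorem inr_mem_splitVertexSet (X : Set V) (w : {u : V // G.Adj v u}) :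
    .inr w ∈ splitVertexSet G v X :=
  Or.inr ⟨w, rfl⟩

theorem splitVertex_dominated_inl_iff {X : Set V} (hvX : v ∉ X) (a : {u : V // u ≠ v}) :
    (.inl a ∈ splitVertexSet G v X ∨ ∃ z ∈ splitVertexSet G v X, (splitVertex G v).Adj z (.inl a)) ↔
      (a : V) ∈ X ∨ G.Adj v a ∨ ∃ u ∈ X, G.Adj u a := by
  constructor
  · rintro ((⟨b, hbX, hba⟩ | ⟨_, hw⟩) | ⟨z | w, hz, hadj⟩)
    · cases hba
      exact Or.inl hbX
    · cases hw
    · obtain ⟨c, hcX, hcz⟩ | ⟨_, hw⟩ := hz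
      · cases hcz
        exact Or.inr (Or.inr ⟨z, hcX, hadj⟩)
      · cases hw
    · rw [splitVertex_adj_inr_inl] at hadj
      exact Or.inr (Or.inl (hadj ▸ w.2))
  · rintro (haX | hva | ⟨u, huX, hua⟩)
    · exact Or.inl (Or.inl ⟨a, haX, rfl⟩)
    · exact Or.inr ⟨.inr ⟨a, hva⟩, inr_mem_splitVertexSet X _, rfl⟩
    · have huv : u ≠ v := fun h => hvX (h ▸ huX)
      exact Or.inr ⟨.inl ⟨u, huv⟩, Or.inl ⟨⟨u, huv⟩, huX, rfl⟩, hua⟩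

end splitVertex

end SimpleGraph

open SimpleGraph in
theorem splitVertex_dominating_iff {V : Type*} (G : SimpleGraph V) (v : V) :
    ∀ X : Set V, v ∉ X →
      ((∀ w : V, w ∈ X ∪ {v} ∨ ∃ u ∈ X ∪ {v}, G.Adj u w) ↔
        (∀ z : {u : V // u ≠ v} ⊕ {u : V // G.Adj v u},
          z ∈ (Sum.inl '' {a : {u : V // u ≠ v} | (a : V) ∈ X} ∪ Set.range Sum.inr) ∨
          ∃ u ∈ (Sum.inl '' {a : {u : V // u ≠ v} | (a : V) ∈ X} ∪ Set.range Sum.inr),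
            (splitVertex G v).Adj u z)) := by
  intro X hvX
  simp only [mem_or_exists_adj_union_singleton_iff, Sum.forall, splitVertex_dominated_inl_iff hvX,
    inr_mem_splitVertexSet, true_or, implies_true, and_true, Subtype.forall, ← or_iff_not_imp_left]
end

section
/- Let G be a finite simple graph and M a module of G, and suppose M contains at least two vertices. If D is a set of vertices such that D ∩ M ≠ ∅, D \ M dominates V(G) \ (M ∪ N(M)) in G, and D ∩ M dominates M in the induced subgraph G[M], then D is a dominating set of G. -/
theorem module_dominating_combination {V : Type*} (G : SimpleGraph V) (M : Set V)
    -- M is a module of G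
    (hM : ∀ u ∈ M, ∀ w ∈ M, G.neighborSet u \ M = G.neighborSet w \ M)
    (hM2 : 2 ≤ M.ncard)
    -- N(M): the vertices outside M adjacent to M
    (NM : Set V) (hNM : NM = {x | x ∉ M ∧ ∃ y ∈ M, G.Adj x y})
    -- X is a set of vertices of G not in M such that X ∪ M dominates V(G) \ N[M]
    (X : Set V) (hXM : Disjoint X M)
    (hX : ∀ v ∈ (Set.univ : Set V) \ (M ∪ NM),
      v ∈ X ∪ M ∨ ∃ u ∈ X ∪ M, G.Adj u v)
    -- D meets M, D \ M dominates V(G) \ (M ∪ N(M)), and D ∩ M dominates M in G[M]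
    (D : Set V) (hDM : (D ∩ M).Nonempty)
    (hD1 : ∀ v ∈ (Set.univ : Set V) \ (M ∪ NM),
      v ∈ D \ M ∨ ∃ u ∈ D \ M, G.Adj u v)
    (hD2 : ∀ v ∈ M, v ∈ D ∩ M ∨ ∃ u ∈ D ∩ M, u ∈ M ∧ G.Adj u v) :
    ∀ v : V, v ∈ D ∨ ∃ u ∈ D, G.Adj u v := by
  intro v
  by_cases hvM : v ∈ M
  · rcases hD2 v hvM with h | ⟨u, hu, _, hadj⟩
    · exact Or.inl h.1
    · exact Or.inr ⟨u, hu.1, hadj⟩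
  · by_cases hvN : v ∈ NM
    · rw [hNM] at hvN
      obtain ⟨_, y, hyM, hadj⟩ := hvN
      obtain ⟨u, huD, huM⟩ := hDM
      have : v ∈ G.neighborSet u \ M := by
        rw [hM u huM y hyM]
        exact ⟨hadj.symm, hvM⟩
      exact Or.inr ⟨u, huD, this.1⟩
    · rcases hD1 v ⟨Set.mem_univ v, fun h => h.elim hvM hvN⟩ with h | ⟨u, hu, hadj⟩
      · exact Or.inl h.1
      · exact Or.inr ⟨u, hu.1, hadj⟩
end
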